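/- arXiv:1501.05424 — 5 statements merged into one kernel-verified Lean document; each statement's English description precedes it below -/
import Mathlib

section
/- The palindromic width of a free abelian group of rank n with respect to a basis is equal to n. -/
/-!
Writing `g = ∑ᵢ gᵢ eᵢ`, each summand is the value of the palindrome `xᵢ^{gᵢ}`, so `n` palindromes
suffice. Conversely, a palindrome is either `u uᴿ` or `u a uᴿ`, so modulo 2 its value is `0` or a
single generator: it has at most one odd coordinate. Odd coordinates of a sum lie in the union of
those of the summands, so `(1, …, 1)` needs at least `n` palindromes.
-/

/-- Evaluation of a word in the alphabet `X ∪ X⁻¹` (a letter is a generator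
index together with a sign) in the free abelian group `ℤⁿ`, where the
generator `i` is the standard basis vector `eᵢ`. -/
def evalZn (n : ℕ) (w : List (Fin n × Bool)) : Fin n → ℤ :=
  (w.map (fun p => if p.2 then Pi.single p.1 (1 : ℤ) else -Pi.single p.1 (1 : ℤ))).sum

/-- A word is a palindrome if it reads the same forwards and backwards. -/
def IsPalindromeWord {n : ℕ} (w : List (Fin n × Bool)) : Prop := w.reverse = w

open Finset

def oddSupport {ι : Type*} [Fintype ι] (g : ι → ℤ) : Finset ι :=
  {i | Odd (g i)}

section OddSupport

variable {ι : Type*} [Fintype ι]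

@[simp]
lemma mem_oddSupport {g : ι → ℤ} {i : ι} : i ∈ oddSupport g ↔ Odd (g i) := by
  simp [oddSupport]

lemma oddSupport_add_subset [DecidableEq ι] (g h : ι → ℤ) :
    oddSupport (g + h) ⊆ oddSupport g ∪ oddSupport h := by
  intro i
  simp only [mem_oddSupport, mem_union, Pi.add_apply, Int.odd_iff]
  omega

lemma oddSupport_add_two_smul (g h : ι → ℤ) : oddSupport (g + 2 • h) = oddSupport g := by
  ext i
  simp [Int.odd_add, parity_simps]

lemma oddSupport_one : oddSupport (1 : ι → ℤ) = univ := by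
  ext i
  simp

lemma card_oddSupport_sum_le_length [DecidableEq ι] (l : List (ι → ℤ))
    (hl : ∀ g ∈ l, #(oddSupport g) ≤ 1) : #(oddSupport l.sum) ≤ l.length := by
  induction l with
  | nil => simp [oddSupport]
  | cons g l ih =>
    simp only [List.mem_cons, forall_eq_or_imp] at hl
    calc #(oddSupport (g :: l).sum)
        ≤ #(oddSupport g ∪ oddSupport l.sum) := card_le_card (oddSupport_add_subset _ _)
      _ ≤ #(oddSupport g) + #(oddSupport l.sum) := card_union_le _ _
      _ ≤ 1 + l.length := add_le_add hl.1 (ih hl.2)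
      _ = (g :: l).length := by simp [add_comm]

end OddSupport

section Words

variable {n : ℕ}

lemma evalZn_append (u v : List (Fin n × Bool)) :
    evalZn n (u ++ v) = evalZn n u + evalZn n v := by
  simp [evalZn]

lemma evalZn_replicate (k : ℕ) (a : Fin n × Bool) :
    evalZn n (List.replicate k a) = k • evalZn n [a] := by
  simp [evalZn, List.map_replicate]

lemma card_oddSupport_evalZn_singleton_le_one (a : Fin n × Bool) :
    #(oddSupport (evalZn n [a])) ≤ 1 := by
  have hsub : oddSupport (evalZn n [a]) ⊆ {a.1} := fun i hi => by
    rw [mem_singleton]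
    by_contra hne
    simp only [evalZn, List.map_singleton, List.sum_singleton, mem_oddSupport] at hi
    split_ifs at hi <;> simp [Pi.single_eq_of_ne hne] at hi
  exact (card_le_card hsub).trans (card_singleton _).le

lemma card_oddSupport_evalZn_le_one {w : List (Fin n × Bool)} (hw : IsPalindromeWord w) :
    #(oddSupport (evalZn n w)) ≤ 1 := by
  induction List.Palindrome.of_reverse_eq hw with
  | nil => simp [evalZn, oddSupport]
  | singleton a => exact card_oddSupport_evalZn_singleton_le_one a
  | @cons_concat a u hu ih =>
    have hval : evalZn n (a :: (u ++ [a])) = evalZn n u + 2 • evalZn n [a] := by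
      rw [← List.singleton_append, evalZn_append, evalZn_append]
      abel
    rw [hval, oddSupport_add_two_smul]
    exact ih hu.reverse_eq

def powerWord (i : Fin n) (z : ℤ) : List (Fin n × Bool) :=
  List.replicate z.natAbs (i, decide (0 ≤ z))

lemma isPalindromeWord_powerWord (i : Fin n) (z : ℤ) : IsPalindromeWord (powerWord i z) :=
  List.reverse_replicate

lemma evalZn_powerWord (i : Fin n) (z : ℤ) : evalZn n (powerWord i z) = Pi.single i z := by
  rw [powerWord, evalZn_replicate]
  rcases le_or_gt 0 z with hz | hz
  · simp [evalZn, hz, ← Pi.single_smul, Int.natAbs_of_nonneg hz]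
  · simp [evalZn, hz.not_ge, ← Pi.single_smul, ← Pi.single_neg,
      Int.ofNat_natAbs_of_nonpos hz.le]

lemma exists_palindromes_length_le_sum_eq (g : Fin n → ℤ) :
    ∃ ws : List (List (Fin n × Bool)),
      ws.length ≤ n ∧ (∀ w ∈ ws, IsPalindromeWord w) ∧ (ws.map (evalZn n)).sum = g := by
  refine ⟨List.ofFn fun i => powerWord i (g i), by simp, ?_, ?_⟩
  · simp only [List.mem_ofFn, forall_exists_index]
    rintro _ i rfl
    exact isPalindromeWord_powerWord i (g i)
  · simp [List.map_ofFn, List.sum_ofFn, Function.comp_def, evalZn_powerWord, univ_sum_single]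

lemma le_length_of_palindromes_sum_eq_one {ws : List (List (Fin n × Bool))}
    (hpal : ∀ w ∈ ws, IsPalindromeWord w) (hsum : (ws.map (evalZn n)).sum = 1) :
    n ≤ ws.length := by
  have hodd := card_oddSupport_sum_le_length (ws.map (evalZn n)) (by
    simp only [List.mem_map, forall_exists_index, and_imp]
    rintro _ w hw rfl
    exact card_oddSupport_evalZn_le_one (hpal w hw))
  rwa [hsum, oddSupport_one, card_univ, Fintype.card_fin, List.length_map] at hodd

end Words

/-- The palindromic width of the free abelian group `ℤⁿ` with respect to the
standard basis is equal to `n`: every element is a product (sum) of at most `n`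
palindromes, and some element is not a product of fewer than `n` palindromes. -/
theorem palindromic_width_free_abelian_eq_rank (n : ℕ) :
    (∀ g : Fin n → ℤ, ∃ ws : List (List (Fin n × Bool)),
      ws.length ≤ n ∧ (∀ w ∈ ws, IsPalindromeWord w) ∧ (ws.map (evalZn n)).sum = g) ∧
    (∃ g : Fin n → ℤ, ¬ ∃ ws : List (List (Fin n × Bool)),
      ws.length < n ∧ (∀ w ∈ ws, IsPalindromeWord w) ∧ (ws.map (evalZn n)).sum = g) :=
  ⟨exists_palindromes_length_le_sum_eq, 1, fun ⟨_, hlen, hpal, hsum⟩ =>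
    (le_length_of_palindromes_sum_eq_one hpal hsum).not_gt hlen⟩
end

section
/- For any group G and G-module A, the maps τᵢ (1 ≤ i ≤ n) on Cⁿ(G,A) defined by Staic satisfy τᵢ² = id, τᵢτⱼ = τⱼτᵢ for |i−j| ≥ 2, and τᵢτᵢ₊₁τᵢ = τᵢ₊₁τᵢτᵢ₊₁, hence define an action of the symmetric group Σₙ₊₁ on Cⁿ(G,A). -/
/-!
Inhomogeneous `n`-cochains correspond bijectively to `G`-equivariant homogeneous cochains
`Gⁿ⁺¹ → A`, via `σ ↦ ((x₀, …, xₙ) ↦ x₀ • σ (x₀⁻¹x₁, …, xₙ₋₁⁻¹xₙ))` with inverse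
`f ↦ (g ↦ f (1, g₁, g₁g₂, …, g₁⋯gₙ))`. On homogeneous cochains `Σₙ₊₁` acts by permuting the
arguments and multiplying by the sign, and this action preserves equivariance. Transporting it
to `Cⁿ(G,A)` gives an action in which the transposition `(i, i+1)` becomes Staic's `τᵢ`, because
swapping two adjacent partial products `g₁⋯gᵢ₋₁` and `g₁⋯gᵢ` produces exactly the arguments
`(gᵢ₋₁gᵢ, gᵢ⁻¹, gᵢgᵢ₊₁)`; the sign of the transposition gives the minus sign, and for `i = 1`
the new leading coordinate `g₁` gives the factor `g₁ •`. The relations then hold because they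
hold among adjacent transpositions.
-/

variable {G A : Type*} [Group G] [AddCommGroup A] [DistribMulAction G A]

/-- The tuple of arguments appearing in Staic's action of the adjacent
transposition `τ_{i+1}` (here indexed by `i : Fin n`, so `i = 0` corresponds
to `τ₁`) on inhomogeneous `n`-cochains: the entries `(g_{i-1}, g_i, g_{i+1})`
are replaced by `(g_{i-1}g_i, g_i⁻¹, g_i g_{i+1})`. -/
def staicArg {G : Type*} [Group G] {n : ℕ} (i : Fin n) (g : Fin n → G) : Fin n → G :=
  fun j =>
    if (j : ℕ) + 1 = (i : ℕ) then g j * g i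
    else if j = i then (g i)⁻¹
    else if (j : ℕ) = (i : ℕ) + 1 then g i * g j
    else g j

/-- Staic's action of the adjacent transposition `τ_{i+1}` of `Σ_{n+1}` on the
group `Cⁿ(G,A)` of inhomogeneous `n`-cochains (functions `Gⁿ → A`):
`(τ₁σ)(g₁,…,gₙ) = −g₁·σ(g₁⁻¹, g₁g₂, g₃,…,gₙ)`,
`(τᵢσ)(g₁,…,gₙ) = −σ(g₁,…,g_{i−2}, g_{i−1}gᵢ, gᵢ⁻¹, gᵢg_{i+1}, g_{i+2},…,gₙ)` for `1 < i < n`,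
`(τₙσ)(g₁,…,gₙ) = −σ(g₁,…,g_{n−1}gₙ, gₙ⁻¹)`. -/
def staicTau (n : ℕ) (i : Fin n) (σ : (Fin n → G) → A) : (Fin n → G) → A :=
  fun g => if (i : ℕ) = 0 then -(g i • σ (staicArg i g)) else -σ (staicArg i g)

open Equiv

section SignedPrecomp

variable {ι X B : Type*} [Fintype ι] [DecidableEq ι] [AddCommGroup B]

def signedPrecomp (π : Perm ι) (f : (ι → X) → B) : (ι → X) → B :=
  fun x => (Perm.sign π : ℤ) • f (x ∘ π)

theorem signedPrecomp_one (f : (ι → X) → B) : signedPrecomp 1 f = f := by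
  funext x
  simp [signedPrecomp]

theorem signedPrecomp_mul (π₁ π₂ : Perm ι) (f : (ι → X) → B) :
    signedPrecomp (π₁ * π₂) f = signedPrecomp π₁ (signedPrecomp π₂ f) := by
  funext x
  simp only [signedPrecomp, map_mul, Units.val_mul, mul_smul]
  rfl

def IsEquivariant (M : Type*) [Monoid M] [MulAction M X] [DistribMulAction M B]
    (f : (ι → X) → B) : Prop :=
  ∀ (c : M) (x : ι → X), f (c • x) = c • f x

theorem IsEquivariant.signedPrecomp {M : Type*} [Monoid M] [MulAction M X]
    [DistribMulAction M B] {f : (ι → X) → B} (hf : IsEquivariant M f) (π : Perm ι) :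
    IsEquivariant M (signedPrecomp π f) := fun c x => by
  simp only [_root_.signedPrecomp, smul_comm c]
  exact congrArg _ (hf c (x ∘ π))

end SignedPrecomp

theorem Equiv.swap_braid {α : Type*} [DecidableEq α] {a b c : α} (hab : a ≠ b) (hac : a ≠ c)
    (hbc : b ≠ c) :
    swap a b * swap b c * swap a b = swap b c * swap a b * swap b c := by
  have h := swap_mul_swap_mul_swap hbc.symm hac.symm
  rw [swap_comm b a, swap_comm c b] at h
  rw [h, swap_mul_swap_mul_swap hab hac, swap_comm]

theorem Fin.commute_swap_castSucc_succ {n : ℕ} {i j : Fin n}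
    (h : (i : ℕ) + 2 ≤ j ∨ (j : ℕ) + 2 ≤ i) :
    Commute (swap i.castSucc i.succ) (swap j.castSucc j.succ) :=
  (Perm.disjoint_swap_swap (by simp [Fin.ext_iff]; omega)).commute

theorem Fin.swap_castSucc_succ_braid {n : ℕ} {i j : Fin n} (h : (j : ℕ) = i + 1) :
    swap i.castSucc i.succ * swap j.castSucc j.succ * swap i.castSucc i.succ =
      swap j.castSucc j.succ * swap i.castSucc i.succ * swap j.castSucc j.succ := by
  have e : j.castSucc = i.succ := Fin.ext h
  rw [e]
  exact Equiv.swap_braid (by simp [Fin.ext_iff]) (by simp [Fin.ext_iff]; omega)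
    (by simp [Fin.ext_iff]; omega)

theorem Fin.swap_castSucc_succ_apply_of_ne {n : ℕ} {i : Fin n} {k : Fin (n + 1)}
    (h₁ : (k : ℕ) ≠ i) (h₂ : (k : ℕ) ≠ i + 1) : swap i.castSucc i.succ k = k :=
  swap_apply_of_ne_of_ne (Fin.ne_of_val_ne h₁) (Fin.ne_of_val_ne h₂)

namespace HomogeneousCochain

variable {n : ℕ}

def toHomogeneous (σ : (Fin n → G) → A) : (Fin (n + 1) → G) → A :=
  fun x => x 0 • σ fun i => (x i.castSucc)⁻¹ * x i.succ

def ofHomogeneous (f : (Fin (n + 1) → G) → A) : (Fin n → G) → A :=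
  fun g => f (Fin.partialProd g)

theorem isEquivariant_toHomogeneous (σ : (Fin n → G) → A) :
    IsEquivariant G (toHomogeneous σ) := fun c x => by
  simp only [toHomogeneous, Pi.smul_apply, smul_eq_mul, mul_inv_rev, mul_assoc,
    inv_mul_cancel_left, mul_smul]

theorem ofHomogeneous_toHomogeneous (σ : (Fin n → G) → A) :
    ofHomogeneous (toHomogeneous σ) = σ := by
  funext g
  simp only [ofHomogeneous, toHomogeneous, Fin.partialProd_zero, one_smul,
    Fin.partialProd_right_inv]

theorem toHomogeneous_ofHomogeneous {f : (Fin (n + 1) → G) → A} (hf : IsEquivariant G f) :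
    toHomogeneous (ofHomogeneous f) = f := by
  funext x
  rw [toHomogeneous, ofHomogeneous, ← hf, Fin.partialProd_left_inv]

def permSmul (π : Perm (Fin (n + 1))) (σ : (Fin n → G) → A) : (Fin n → G) → A :=
  ofHomogeneous (signedPrecomp π (toHomogeneous σ))

theorem permSmul_mul (π₁ π₂ : Perm (Fin (n + 1))) (σ : (Fin n → G) → A) :
    permSmul (π₁ * π₂) σ = permSmul π₁ (permSmul π₂ σ) := by
  rw [permSmul, permSmul, permSmul,
    toHomogeneous_ofHomogeneous ((isEquivariant_toHomogeneous σ).signedPrecomp π₂),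
    signedPrecomp_mul]

variable (G A n) in
abbrev permAction : DistribMulAction (Perm (Fin (n + 1))) ((Fin n → G) → A) where
  smul := permSmul
  one_smul σ := by
    change permSmul 1 σ = σ
    rw [permSmul, signedPrecomp_one, ofHomogeneous_toHomogeneous]
  mul_smul := permSmul_mul
  smul_zero π := by
    change permSmul π 0 = 0
    funext g
    simp [permSmul, ofHomogeneous, signedPrecomp, toHomogeneous]
  smul_add π σ₁ σ₂ := by
    change permSmul π (σ₁ + σ₂) = permSmul π σ₁ + permSmul π σ₂
    funext g
    simp [permSmul, ofHomogeneous, signedPrecomp, toHomogeneous, smul_add]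

theorem partialProd_swap_zero (g : Fin n → G) (i : Fin n) :
    Fin.partialProd g (swap i.castSucc i.succ 0) = if (i : ℕ) = 0 then g i else 1 := by
  split_ifs with hi
  · have hi : i.castSucc = 0 := Fin.ext hi
    rw [← hi, swap_apply_left, Fin.partialProd_succ, hi, Fin.partialProd_zero, one_mul]
  · rw [Fin.swap_castSucc_succ_apply_of_ne (Ne.symm hi) (by simp), Fin.partialProd_zero]

theorem partialProd_swap_inv_mul (g : Fin n → G) (i j : Fin n) :
    (Fin.partialProd g (swap i.castSucc i.succ j.castSucc))⁻¹ *
      Fin.partialProd g (swap i.castSucc i.succ j.succ) = staicArg i g j := by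
  unfold staicArg
  split_ifs with h₁ h₂ h₃
  · have e : j.succ = i.castSucc := Fin.ext h₁
    rw [e, swap_apply_left,
      Fin.swap_castSucc_succ_apply_of_ne (k := j.castSucc) (by simp; omega) (by simp; omega),
      Fin.partialProd_succ, ← e, Fin.partialProd_succ]
    group
  · subst h₂
    rw [swap_apply_left, swap_apply_right, Fin.partialProd_succ]
    group
  · have e : j.castSucc = i.succ := Fin.ext h₃
    rw [e, swap_apply_right,
      Fin.swap_castSucc_succ_apply_of_ne (k := j.succ) (by simp; omega) (by simp; omega),
      Fin.partialProd_succ g j, e, Fin.partialProd_succ]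
    group
  · have h₂ : (j : ℕ) ≠ i := Fin.val_ne_of_ne h₂
    rw [Fin.swap_castSucc_succ_apply_of_ne (k := j.castSucc) (by simpa) (by simp; omega),
      Fin.swap_castSucc_succ_apply_of_ne (k := j.succ) (by simp; omega) (by simpa),
      Fin.partialProd_right_inv]

theorem permSmul_swap (i : Fin n) (σ : (Fin n → G) → A) :
    permSmul (swap i.castSucc i.succ) σ = staicTau n i σ := by
  funext g
  simp only [permSmul, ofHomogeneous, signedPrecomp, toHomogeneous, Function.comp_apply,
    Perm.sign_swap (Fin.castSucc_lt_succ (i := i)).ne, partialProd_swap_zero,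
    partialProd_swap_inv_mul, staicTau, Units.val_neg, Units.val_one, neg_smul, one_smul]
  split_ifs <;> simp

end HomogeneousCochain

open HomogeneousCochain in
/-- Staic's maps `τᵢ` (`1 ≤ i ≤ n`) on `Cⁿ(G,A)` satisfy `τᵢ² = id`,
`τᵢτⱼ = τⱼτᵢ` for `|i−j| ≥ 2`, and the braid relation
`τᵢτ_{i+1}τᵢ = τ_{i+1}τᵢτ_{i+1}`; hence they define an action of the symmetric
group `Σ_{n+1}` on `Cⁿ(G,A)` in which the adjacent transposition `(i, i+1)`
acts by `τᵢ`. -/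
theorem staic_symmetric_group_action (n : ℕ) :
    (∀ (i : Fin n) (σ : (Fin n → G) → A), staicTau n i (staicTau n i σ) = σ) ∧
    (∀ (i j : Fin n), (i : ℕ) + 2 ≤ (j : ℕ) ∨ (j : ℕ) + 2 ≤ (i : ℕ) →
      ∀ σ : (Fin n → G) → A, staicTau n i (staicTau n j σ) = staicTau n j (staicTau n i σ)) ∧
    (∀ (i j : Fin n), (j : ℕ) = (i : ℕ) + 1 →
      ∀ σ : (Fin n → G) → A,
        staicTau n i (staicTau n j (staicTau n i σ)) =
          staicTau n j (staicTau n i (staicTau n j σ))) ∧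
    (∃ ρ : Equiv.Perm (Fin (n + 1)) →* Multiplicative (AddAut ((Fin n → G) → A)),
      ∀ (i : Fin n) (σ : (Fin n → G) → A),
        Multiplicative.toAdd (ρ (Equiv.swap i.castSucc i.succ)) σ = staicTau n i σ) := by
  let := permAction G A n
  have hτ (i : Fin n) (σ : (Fin n → G) → A) :
      staicTau n i σ = swap i.castSucc i.succ • σ :=
    (permSmul_swap i σ).symm
  simp only [hτ, smul_smul]
  refine ⟨fun i σ => by rw [swap_mul_self, one_smul],
    fun i j h σ => by rw [(Fin.commute_swap_castSucc_succ h).eq],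
    fun i j h σ => by rw [← mul_assoc, ← mul_assoc, Fin.swap_castSucc_succ_braid h],
    DistribMulAction.toAddAut _ _, fun i σ => rfl⟩
end

section
/- An extension 0 → A → E → G → 1 of a group G by an abelian group A admits a set-theoretic section s : G → E with s(g⁻¹) = s(g)⁻¹ for all g and s(1) = 1 if and only if its cohomology class lies in the image of HS²(G,A) → H²(G,A). -/
/-- An extension `0 → A → E → G → 1` of a group `G` by a `G`-module `A`
(inducing the given action) admits a set-theoretic section `s : G → E` with
`s(1) = 1` and `s(g⁻¹) = s(g)⁻¹` for all `g` (i.e. is a symmetric extension) if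
and only if some section has a factor set which is a `Σ₃`-invariant 2-cocycle;
equivalently, if and only if the cohomology class of the extension lies in the
image of `h² : HS²(G,A) → H²(G,A)`. -/
theorem symmetric_extension_iff_invariant_cocycle
    {G A E : Type*} [Group G] [AddCommGroup A] [DistribMulAction G A] [Group E]
    (ι : A → E) (π : E →* G)
    (hι : ∀ a b : A, ι (a + b) = ι a * ι b)
    (hinj : Function.Injective ι)
    (hsurj : Function.Surjective π)
    (hker : ∀ e : E, π e = 1 ↔ e ∈ Set.range ι)
    (hact : ∀ (e : E) (a : A), ι (π e • a) = e * ι a * e⁻¹) :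
    (∃ s : G → E, (∀ g : G, π (s g) = g) ∧ s 1 = 1 ∧ ∀ g : G, s g⁻¹ = (s g)⁻¹) ↔
    (∃ (σ : G → G → A) (s : G → E),
      (∀ g : G, π (s g) = g) ∧
      (∀ g h : G, s g * s h = ι (σ g h) * s (g * h)) ∧
      (∀ g₁ g₂ g₃ : G,
        g₁ • σ g₂ g₃ - σ (g₁ * g₂) g₃ + σ g₁ (g₂ * g₃) - σ g₁ g₂ = 0) ∧
      (∀ g₁ g₂ : G, -(g₁ • σ g₁⁻¹ (g₁ * g₂)) = σ g₁ g₂) ∧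
      (∀ g₁ g₂ : G, -σ (g₁ * g₂) g₂⁻¹ = σ g₁ g₂)) := by
  have hι0 : ι 0 = 1 := by
    have h := hι 0 0
    rw [add_zero] at h
    exact (left_eq_mul.mp h)
  have hneg : ∀ a : A, ι (-a) = (ι a)⁻¹ := by
    intro a
    apply eq_inv_of_mul_eq_one_left
    rw [← hι, neg_add_cancel, hι0]
  constructor
  · rintro ⟨s, hs, hs1, hsinv⟩
    have hmem : ∀ g h : G, π (s g * s h * (s (g * h))⁻¹) = 1 := by
      intro g h; simp only [map_mul, map_inv, hs]; group
    choose σ hσ using fun g h => (hker _).mp (hmem g h)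
    have hact' : ∀ (g : G) (a : A), ι (g • a) = s g * ι a * (s g)⁻¹ := by
      intro g a
      have h := hact (s g) a
      rwa [hs] at h
    refine ⟨σ, s, hs, ?_, ?_, ?_, ?_⟩
    · intro g h
      rw [hσ]
      group
    · intro g₁ g₂ g₃
      have key : ι (σ g₁ g₂ + σ (g₁ * g₂) g₃) = ι (g₁ • σ g₂ g₃ + σ g₁ (g₂ * g₃)) := by
        rw [hι, hι, hσ g₁ g₂, hσ (g₁ * g₂) g₃, hact', hσ g₂ g₃, hσ g₁ (g₂ * g₃),
          ← mul_assoc g₁ g₂ g₃]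
        group
      have key2 : σ g₁ g₂ + σ (g₁ * g₂) g₃ = g₁ • σ g₂ g₃ + σ g₁ (g₂ * g₃) := hinj key
      have : g₁ • σ g₂ g₃ - σ (g₁ * g₂) g₃ + σ g₁ (g₂ * g₃) - σ g₁ g₂
          = (g₁ • σ g₂ g₃ + σ g₁ (g₂ * g₃)) - (σ g₁ g₂ + σ (g₁ * g₂) g₃) := by abel
      rw [this, ← key2, sub_self]
    · intro g₁ g₂
      apply hinj
      rw [hneg, hact', hσ, inv_mul_cancel_left, hsinv, hσ]
      group
    · intro g₁ g₂
      apply hinj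
      rw [hneg, hσ, mul_inv_cancel_right, hsinv, hσ]
      group
  · rintro ⟨σ, s, hs, hfs, hcoc, hsym1, hsym2⟩
    classical
    have h2c : -σ 1 1 = σ 1 1 := by simpa using hsym1 1 1
    have hs1 : s 1 = ι (σ 1 1) := by
      have h := hfs 1 1
      rw [mul_one] at h
      exact mul_right_cancel h
    have hσg1 : ∀ g : G, σ g 1 = g • σ 1 1 := by
      intro g
      have h := hcoc g 1 1
      rw [mul_one, one_mul] at h
      have h' : g • σ 1 1 - σ g 1 = 0 := by
        have : g • σ 1 1 - σ g 1 = g • σ 1 1 - σ g 1 + σ g 1 - σ g 1 := by abel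
        rw [this, h]
      exact (sub_eq_zero.mp h').symm
    have hinvc : ∀ g : G, σ g g⁻¹ = -σ 1 1 := by
      intro g
      have h := hsym1 g g⁻¹
      rw [mul_inv_cancel, hσg1, smul_smul, mul_inv_cancel, one_smul] at h
      exact h.symm
    have hsginv : ∀ g : G, s g⁻¹ * s g = 1 := by
      intro g
      have h := hfs g⁻¹ g
      have h2 : σ g⁻¹ g = -σ 1 1 := by
        have := hinvc g⁻¹
        rwa [inv_inv] at this
      rw [inv_mul_cancel, hs1, h2, ← hι, neg_add_cancel, hι0] at h
      exact h
    refine ⟨fun g => if g = 1 then 1 else s g, ?_, ?_, ?_⟩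
    · intro g
      by_cases hg : g = 1
      · simp [hg]
      · simp [hg, hs]
    · simp
    · intro g
      by_cases hg : g = 1
      · simp [hg]
      · have hg' : g⁻¹ ≠ 1 := fun h => hg (by simpa using congrArg Inv.inv h)
        simp only [hg, hg', if_neg]
        exact eq_inv_of_mul_eq_one_left (hsginv g)
end

section
/- The map h² : HS²(G,A) → H²(G,A) induced by the inclusion of Σ₃-invariant 2-cochains into all 2-cochains is injective. -/
/-! The difference `σ₁ - σ₂ = dμ` is again `τ₁`-invariant, and `τ₁`-invariance of `dμ`
evaluated at `(g, 1)` says precisely that `μ` is `Σ₂`-invariant: the given `μ` already works. -/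

section

variable {G A : Type*} [Group G] [AddCommGroup A] [DistribMulAction G A]

def coboundaryOne (μ : G → A) (g₁ g₂ : G) : A :=
  g₁ • μ g₂ - μ (g₁ * g₂) + μ g₁

def IsTau1Invariant (σ : G → G → A) : Prop :=
  ∀ g₁ g₂ : G, -(g₁ • σ g₁⁻¹ (g₁ * g₂)) = σ g₁ g₂

theorem IsTau1Invariant.sub {σ₁ σ₂ : G → G → A} (h₁ : IsTau1Invariant σ₁)
    (h₂ : IsTau1Invariant σ₂) : IsTau1Invariant (σ₁ - σ₂) := by
  intro g₁ g₂
  simp only [Pi.sub_apply, smul_sub, neg_sub, ← h₁ g₁ g₂, ← h₂ g₁ g₂]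
  abel

theorem neg_smul_apply_inv_eq_of_isTau1Invariant_coboundaryOne {μ : G → A}
    (h : IsTau1Invariant (coboundaryOne μ)) (g : G) : -(g • μ g⁻¹) = μ g := by
  have hg := h g 1
  simp only [coboundaryOne, mul_one, inv_mul_cancel, smul_add, smul_sub, smul_inv_smul,
    neg_add, neg_sub] at hg
  exact add_left_cancel hg

end

theorem symmetric_h2_injective_general
    {G A : Type*} [Group G] [AddCommGroup A] [DistribMulAction G A]
    (σ₁ σ₂ : G → G → A)
    (hi₁ : (∀ g₁ g₂ : G, -(g₁ • σ₁ g₁⁻¹ (g₁ * g₂)) = σ₁ g₁ g₂) ∧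
           (∀ g₁ g₂ : G, -σ₁ (g₁ * g₂) g₂⁻¹ = σ₁ g₁ g₂))
    (hi₂ : (∀ g₁ g₂ : G, -(g₁ • σ₂ g₁⁻¹ (g₁ * g₂)) = σ₂ g₁ g₂) ∧
           (∀ g₁ g₂ : G, -σ₂ (g₁ * g₂) g₂⁻¹ = σ₂ g₁ g₂))
    (hcob : ∃ μ : G → A,
      ∀ g₁ g₂ : G, σ₁ g₁ g₂ - σ₂ g₁ g₂ = g₁ • μ g₂ - μ (g₁ * g₂) + μ g₁) :
    ∃ μ : G → A, (∀ g : G, -(g • μ g⁻¹) = μ g) ∧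
      ∀ g₁ g₂ : G, σ₁ g₁ g₂ - σ₂ g₁ g₂ = g₁ • μ g₂ - μ (g₁ * g₂) + μ g₁ := by
  obtain ⟨μ, hμ⟩ := hcob
  have hdiff : σ₁ - σ₂ = coboundaryOne μ := funext₂ hμ
  have hinv : IsTau1Invariant (coboundaryOne μ) := hdiff ▸ IsTau1Invariant.sub hi₁.1 hi₂.1
  exact ⟨μ, neg_smul_apply_inv_eq_of_isTau1Invariant_coboundaryOne hinv, hμ⟩

/-- Injectivity of `h² : HS²(G,A) → H²(G,A)`: if two `Σ₃`-invariant 2-cocycles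
(`Σ₃` acting via Staic's formulas `(τ₁σ)(g₁,g₂) = −g₁σ(g₁⁻¹, g₁g₂)`,
`(τ₂σ)(g₁,g₂) = −σ(g₁g₂, g₂⁻¹)`) differ by the coboundary of a 1-cochain, then
they differ by the coboundary of a `Σ₂`-invariant 1-cochain. -/
theorem symmetric_h2_injective
    {G A : Type*} [Group G] [AddCommGroup A] [DistribMulAction G A]
    (σ₁ σ₂ : G → G → A)
    (hc₁ : ∀ g₁ g₂ g₃ : G,
      g₁ • σ₁ g₂ g₃ - σ₁ (g₁ * g₂) g₃ + σ₁ g₁ (g₂ * g₃) - σ₁ g₁ g₂ = 0)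
    (hc₂ : ∀ g₁ g₂ g₃ : G,
      g₁ • σ₂ g₂ g₃ - σ₂ (g₁ * g₂) g₃ + σ₂ g₁ (g₂ * g₃) - σ₂ g₁ g₂ = 0)
    (hi₁ : (∀ g₁ g₂ : G, -(g₁ • σ₁ g₁⁻¹ (g₁ * g₂)) = σ₁ g₁ g₂) ∧
           (∀ g₁ g₂ : G, -σ₁ (g₁ * g₂) g₂⁻¹ = σ₁ g₁ g₂))
    (hi₂ : (∀ g₁ g₂ : G, -(g₁ • σ₂ g₁⁻¹ (g₁ * g₂)) = σ₂ g₁ g₂) ∧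
           (∀ g₁ g₂ : G, -σ₂ (g₁ * g₂) g₂⁻¹ = σ₂ g₁ g₂))
    (hcob : ∃ μ : G → A,
      ∀ g₁ g₂ : G, σ₁ g₁ g₂ - σ₂ g₁ g₂ = g₁ • μ g₂ - μ (g₁ * g₂) + μ g₁) :
    ∃ μ : G → A, (∀ g : G, -(g • μ g⁻¹) = μ g) ∧
      ∀ g₁ g₂ : G, σ₁ g₁ g₂ - σ₂ g₁ g₂ = g₁ • μ g₂ - μ (g₁ * g₂) + μ g₁ :=
  symmetric_h2_injective_general σ₁ σ₂ hi₁ hi₂ hcob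
end

section
/- Every element of the commutator subgroup of the wreath product ℤ ≀ ℤ is a single commutator. -/
/-- The shift action of `ℤ` on `⊕_{i∈ℤ} ℤ` (written multiplicatively), used to
form the restricted wreath product `ℤ ≀ ℤ`. -/
noncomputable def wrShift : Multiplicative ℤ →* MulAut (Multiplicative (ℤ →₀ ℤ)) where
  toFun z := AddEquiv.toMultiplicative (Finsupp.domCongr (Equiv.addRight z.toAdd))
  map_one' := by
    ext f : 1
    apply Multiplicative.toAdd.injective
    ext i
    simp
    rfl
  map_mul' z w := by
    ext f : 1
    apply Multiplicative.toAdd.injective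
    ext i
    have h : (Equiv.symm (Equiv.addRight (Multiplicative.toAdd w) *
        Equiv.addRight (Multiplicative.toAdd z))) i
        = i + -Multiplicative.toAdd z + -Multiplicative.toAdd w := by
      rw [Equiv.symm_apply_eq]
      simp [Equiv.Perm.mul_apply]
      ring
    simp [MulAut.mul_apply, h]

/-- The restricted wreath product `ℤ ≀ ℤ = (⊕_{i∈ℤ} ℤ) ⋊ ℤ`, with `ℤ` acting by
shifting coordinates. -/
noncomputable abbrev WreathZZ :=
  SemidirectProduct (Multiplicative (ℤ →₀ ℤ)) (Multiplicative ℤ) wrShift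

/-!
An element `g = (f, t^k)` of the commutator subgroup of `ℤ ≀ ℤ` has `k = 0` and, since the
augmentation `f ↦ ∑ᵢ f i` is a shift-invariant homomorphism, `∑ᵢ f i = 0`. The prefix sums
`F n = ∑_{i < n} f i` then vanish outside a finite interval, so `F` is finitely supported, and
`f` is its forward difference `f i = F (i + 1) - F i`. This forward difference is exactly the
commutator `[F, t]` of `F` with the shift generator `t`.
-/

open fwdDiff SemidirectProduct

theorem Finsupp.exists_fwdDiff_eq_of_degree_eq_zero {M : Type*} [AddCommGroup M] (f : ℤ →₀ M)
    (hf : f.degree = 0) : ∃ F : ℤ →₀ M, Δ_[1] ⇑F = ⇑f := by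
  set F : ℤ → M := fun n ↦ ∑ i ∈ f.support, if i < n then f i else 0
  obtain ⟨lo, hlo⟩ := f.support.bddBelow
  obtain ⟨up, hup⟩ := f.support.bddAbove
  have hF : ∀ n, F n ≠ 0 → n ∈ Finset.Ioc lo up := by
    intro n hFn
    rw [Finset.mem_Ioc]
    by_contra! h
    refine hFn ?_
    rcases le_or_gt n lo with hn | hn
    · refine Finset.sum_eq_zero fun i hi ↦ if_neg ?_
      exact (hn.trans (hlo hi)).not_gt
    · rw [← hf, degree_apply]
      exact Finset.sum_congr rfl fun i hi ↦ if_pos ((hup hi).trans_lt (h hn))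
  refine ⟨Finsupp.onFinset _ F hF, funext fun n ↦ ?_⟩
  simp only [fwdDiff, onFinset_apply, F, ← Finset.sum_sub_distrib]
  have h_step : ∀ i, ((if i < n + 1 then f i else 0) - if i < n then f i else 0) =
      if n = i then f i else 0 := by
    intro i
    rcases lt_trichotomy i n with h | rfl | h
    · simp [h, h.ne', h.trans (Int.lt_succ n)]
    · simp
    · simp [h.ne, h.not_gt, (Int.add_one_le_iff.mpr h).not_gt]
  rw [Finset.sum_congr rfl fun i _ ↦ h_step i, Finset.sum_ite_eq]
  exact ite_eq_left_iff.mpr fun hn ↦ (notMem_support_iff.mp hn).symm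

lemma wrShift_apply (z : Multiplicative ℤ) (x : Multiplicative (ℤ →₀ ℤ)) (i : ℤ) :
    Multiplicative.toAdd (wrShift z x) i = Multiplicative.toAdd x (i - Multiplicative.toAdd z) := by
  simp [wrShift]
  rfl

theorem WreathZZ.commutator_inl_inr_one (F f : ℤ →₀ ℤ) (h : Δ_[1] ⇑F = ⇑f) :
    (inl (Multiplicative.ofAdd F) : WreathZZ)⁻¹ * (inr (Multiplicative.ofAdd 1))⁻¹ *
      inl (Multiplicative.ofAdd F) * inr (Multiplicative.ofAdd 1) =
      inl (Multiplicative.ofAdd f) := by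
  ext : 1
  · apply Multiplicative.toAdd.injective
    ext i
    simp only [mul_left, inv_left, inv_right, mul_right, left_inl, right_inl, left_inr, right_inr,
      toAdd_mul, Finsupp.add_apply, wrShift_apply, map_one]
    simp [← congrFun h i, fwdDiff, neg_add_eq_sub]
  · simp

noncomputable def WreathZZ.augmentation : WreathZZ →* Multiplicative ℤ :=
  lift (AddMonoidHom.toMultiplicative Finsupp.degree) 1 fun z ↦ by
    ext x
    simp [wrShift, Finsupp.equivMapDomain_eq_mapDomain]

theorem WreathZZ.augmentation_apply (g : WreathZZ) :
    augmentation g = Multiplicative.ofAdd (Multiplicative.toAdd g.left).degree := by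
  simp [augmentation, lift]

/-- Every element of the commutator subgroup of the wreath product `ℤ ≀ ℤ` is a
single commutator `[a,b] = a⁻¹b⁻¹ab`. -/
theorem wreath_product_every_element_is_commutator (g : WreathZZ)
    (hg : g ∈ commutator WreathZZ) :
    ∃ a b : WreathZZ, g = a⁻¹ * b⁻¹ * a * b := by
  have h_right : g.right = 1 := Abelianization.commutator_subset_ker rightHom hg
  have h_degree : (Multiplicative.toAdd g.left).degree = 0 := by
    simpa [WreathZZ.augmentation_apply] using
      Abelianization.commutator_subset_ker WreathZZ.augmentation hg
  obtain ⟨F, hF⟩ := (Multiplicative.toAdd g.left).exists_fwdDiff_eq_of_degree_eq_zero h_degree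
  refine ⟨inl (Multiplicative.ofAdd F), inr (Multiplicative.ofAdd 1), ?_⟩
  rw [WreathZZ.commutator_inl_inr_one F _ hF, ← inl_left_mul_inr_right g, h_right, map_one,
    mul_one]
  rfl
end
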